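/- Let G ≤ PL₊(I) and suppose (A₁,g₁) and (A₂,g₂) are factor signed orbitals associated to elements of G with the closure of A₁ contained in A₂. Then the conjugate g₁^{g₂} = g₂⁻¹g₁g₂ is a one-bump factor of an element of G, with support A₁·g₂ ⊆ A₂. -/

import Mathlib

open Set

namespace PLPaper

/-- We model `PL₊(I)` inside the group of bijections of `ℝ` with *opposite*
composition, so that the group acts on `ℝ` on the right:
`x · (g * h) = (x · g) · h`. -/
abbrev PermR : Type := (Equiv.Perm ℝ)ᵐᵒᵖ

/-- The (right) action of `g` on the point `x`. -/
def ap (g : PermR) (x : ℝ) : ℝ := g.unop x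

/-- `g` is affine on a neighbourhood of `x`. -/
def IsLocallyAffineAt (g : PermR) (x : ℝ) : Prop :=
  ∃ m b : ℝ, ∀ᶠ y in nhds x, ap g y = m * y + b

/-- The breakpoints of `g`: points of `(0,1)` where `g` is not locally affine
(equivalently, for a PL map, where the derivative fails to exist). -/
def Breakpoints (g : PermR) : Set ℝ :=
  {x ∈ Ioo (0:ℝ) 1 | ¬ IsLocallyAffineAt g x}

/-- `g` is an orientation-preserving piecewise-linear homeomorphism of `[0,1]`
(extended by the identity to all of `ℝ`), with finitely many breakpoints. -/
def IsPL (g : PermR) : Prop :=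
  StrictMono (ap g) ∧ (∀ x ∉ Ioo (0:ℝ) 1, ap g x = x) ∧ (Breakpoints g).Finite

/-- The support of `g`. -/
def Supp (g : PermR) : Set ℝ := {x | ap g x ≠ x}

/-- `(a,b)` is an orbital of `g`, i.e. a connected component of `Supp g`. -/
def IsOrbital (g : PermR) (a b : ℝ) : Prop :=
  a < b ∧ Ioo a b ⊆ Supp g ∧ a ∉ Supp g ∧ b ∉ Supp g

/-- The support of a subgroup `G`. -/
def GSupp (G : Subgroup PermR) : Set ℝ := ⋃ g ∈ (G : Set PermR), Supp g

/-- `(a,b)` is an orbital of the group `G`, i.e. a connected component of its support. -/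
def IsGroupOrbital (G : Subgroup PermR) (a b : ℝ) : Prop :=
  a < b ∧ Ioo a b ⊆ GSupp G ∧ a ∉ GSupp G ∧ b ∉ GSupp G

/-- The pair `g, h` carries a transition chain: orbitals `(a,b)` of `g` and
`(c,d)` of `h` with `a < c < b < d`. -/
def ElemsTransitionChain (g h : PermR) : Prop :=
  ∃ a b c d : ℝ, IsOrbital g a b ∧ IsOrbital h c d ∧ a < c ∧ c < b ∧ b < d

/-- The pair `g, h` carries a one-sided overlap: orbitals `(a,b)` of `g` and
`(a,c)` of `h`, or `(a,b)` of `g` and `(c,b)` of `h`, where `a < c < b`. -/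
def ElemsOneSidedOverlap (g h : PermR) : Prop :=
  ∃ a b c : ℝ, a < c ∧ c < b ∧
    ((IsOrbital g a b ∧ IsOrbital h a c) ∨ (IsOrbital g a b ∧ IsOrbital h c b))

def AdmitsTransitionChain (G : Subgroup PermR) : Prop :=
  ∃ g ∈ G, ∃ h ∈ G, ElemsTransitionChain g h

def AdmitsOneSidedOverlap (G : Subgroup PermR) : Prop :=
  ∃ g ∈ G, ∃ h ∈ G, ElemsOneSidedOverlap g h

/-- `G` admits a bad overlap: orbitals `A` of `f ∈ G` and `B` of `g ∈ G` which
intersect, are distinct, and neither closure is contained in the other orbital. -/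
def AdmitsBadOverlap (G : Subgroup PermR) : Prop :=
  ∃ f ∈ G, ∃ g ∈ G, ∃ a b c d : ℝ, IsOrbital f a b ∧ IsOrbital g c d ∧
    (Ioo a b ∩ Ioo c d).Nonempty ∧ Ioo a b ≠ Ioo c d ∧
    ¬ Icc a b ⊆ Ioo c d ∧ ¬ Icc c d ⊆ Ioo a b

/-- A tower: a set of signed orbitals `((a,b), g)` with pairwise nested orbitals,
where equal orbitals force equal signatures. -/
def IsTower (T : Set ((ℝ × ℝ) × PermR)) : Prop :=
  (∀ p ∈ T, IsOrbital p.2 p.1.1 p.1.2) ∧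
  (∀ p ∈ T, ∀ q ∈ T,
      Ioo p.1.1 p.1.2 ⊆ Ioo q.1.1 q.1.2 ∨ Ioo q.1.1 q.1.2 ⊆ Ioo p.1.1 p.1.2) ∧
  (∀ p ∈ T, ∀ q ∈ T, p.1 = q.1 → p.2 = q.2)

/-- `G` admits the tower `T` if `T` is a tower all of whose signatures lie in `G`. -/
def AdmitsTower (G : Subgroup PermR) (T : Set ((ℝ × ℝ) × PermR)) : Prop :=
  IsTower T ∧ ∀ p ∈ T, p.2 ∈ G

def AdmitsInfiniteTower (G : Subgroup PermR) : Prop :=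
  ∃ T : Set ((ℝ × ℝ) × PermR), AdmitsTower G T ∧ T.Infinite

/-- The set of breakpoints of the elements of a set `S`. -/
def BreakSet (S : Set PermR) : Set ℝ := ⋃ g ∈ S, Breakpoints g

/-- The derived length of a group: the least `n` with `derivedSeries G n = ⊥`. -/
noncomputable def derivedLength (G : Type*) [Group G] : ℕ :=
  sInf {n : ℕ | derivedSeries G n = ⊥}

/-- `g` is the one-bump factor of `f` over the orbital `(a,b)` of `f`:
`g` agrees with `f` on `(a,b)` and is the identity elsewhere. -/
def IsOneBumpFactor (g f : PermR) (a b : ℝ) : Prop :=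
  IsOrbital f a b ∧ (∀ x ∈ Ioo a b, ap g x = ap f x) ∧ (∀ x ∉ Ioo a b, ap g x = x)

/-- `g` is a one-bump factor of `f`. -/
def IsFactorOf (g f : PermR) : Prop := ∃ a b : ℝ, IsOneBumpFactor g f a b

/-- `((a,b), g)` is a factor signed orbital associated to (an element of) `G`. -/
def AssociatedFactor (G : Subgroup PermR) (a b : ℝ) (g : PermR) : Prop :=
  ∃ f ∈ G, IsOneBumpFactor g f a b

/-- The split group `S(G)`: the subgroup generated by the one-bump factors of
all elements of `G`. -/
def SplitGroup (G : Subgroup PermR) : Subgroup PermR :=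
  Subgroup.closure {g : PermR | ∃ f ∈ G, IsFactorOf g f}

/-! Conjugation by `g₂` only sees `g₂` on `supp g₁ = A₁ ⊆ A₂`, where `g₂` agrees with the
element `f₂ ∈ G` it is a factor of; so `g₁^{g₂} = g₁^{f₂}`. Conjugating the whole of `f₁ ∈ G`
by the increasing bijection `f₂` carries the orbital `A₁` to the orbital `A₁·f₂` and the
factor `g₁` to `g₁^{f₂}`, which is therefore a one-bump factor of `f₁^{f₂} ∈ G`. -/

@[simp]
lemma ap_mul (g h : PermR) (x : ℝ) : ap (g * h) x = ap h (ap g x) := rfl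

@[simp]
lemma ap_inv_ap (g : PermR) (x : ℝ) : ap g⁻¹ (ap g x) = x := by
  simp [ap]

@[simp]
lemma ap_ap_inv (g : PermR) (x : ℝ) : ap g (ap g⁻¹ x) = x := by
  simp [ap]

lemma ap_injective (g : PermR) : Function.Injective (ap g) := g.unop.injective

lemma ext_ap {g h : PermR} (H : ∀ x, ap g x = ap h x) : g = h :=
  MulOpposite.unop_injective (Equiv.ext H)

lemma notMem_supp_iff {g : PermR} {x : ℝ} : x ∉ Supp g ↔ ap g x = x := not_not

lemma mapsTo_supp (g : PermR) : MapsTo (ap g) (Supp g) (Supp g) :=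
  fun _ hx h => hx (ap_injective g h)

lemma supp_conj (g h : PermR) : Supp (h⁻¹ * g * h) = ap h '' Supp g := by
  ext x
  constructor
  · intro hx
    refine ⟨ap h⁻¹ x, fun hfix => hx ?_, ap_ap_inv h x⟩
    simp only [ap_mul, hfix, ap_ap_inv]
  · rintro ⟨y, hy, rfl⟩
    simpa only [Supp, mem_ofPred_eq, ap_mul, ap_inv_ap, (ap_injective h).ne_iff] using hy

lemma conj_congr_of_eqOn_supp {g h k : PermR} (hkh : EqOn (ap k) (ap h) (Supp g)) :
    k⁻¹ * g * k = h⁻¹ * g * h := by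
  refine ext_ap fun x => ?_
  by_cases hx : x ∈ ap h '' Supp g
  · obtain ⟨y, hy, rfl⟩ := hx
    simp only [ap_mul, ap_inv_ap]
    rw [← hkh hy, ap_inv_ap, hkh (mapsTo_supp g hy)]
  · have hx' : x ∉ ap k '' Supp g := by rwa [hkh.image_eq]
    rw [← supp_conj] at hx hx'
    rw [notMem_supp_iff.mp hx, notMem_supp_iff.mp hx']

lemma image_Ioo_of_strictMono {h : PermR} (hh : StrictMono (ap h)) (a b : ℝ) :
    ap h '' Ioo a b = Ioo (ap h a) (ap h b) :=
  (hh.orderIsoOfSurjective _ fun y => ⟨ap h⁻¹ y, ap_ap_inv h y⟩).image_Ioo a b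

namespace IsOneBumpFactor

variable {g f : PermR} {a b : ℝ}

lemma supp_eq (hgf : IsOneBumpFactor g f a b) : Supp g = Ioo a b := by
  obtain ⟨⟨-, hsub, -, -⟩, heq, hid⟩ := hgf
  ext x
  refine ⟨fun hx => by_contra fun hab => hx (hid x hab), fun hx => ?_⟩
  show ap g x ≠ x
  rw [heq x hx]
  exact hsub hx

lemma conj {h : PermR} (hgf : IsOneBumpFactor g f a b) (hh : StrictMono (ap h)) :
    IsOneBumpFactor (h⁻¹ * g * h) (h⁻¹ * f * h) (ap h a) (ap h b) := by
  obtain ⟨⟨hab, hsub, ha, hb⟩, heq, hid⟩ := hgf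
  have hsupp : Supp (h⁻¹ * f * h) = ap h '' Supp f := supp_conj f h
  refine ⟨⟨hh hab, ?_, ?_, ?_⟩, ?_, ?_⟩
  · rw [← image_Ioo_of_strictMono hh, hsupp]
    exact image_mono hsub
  · rwa [hsupp, (ap_injective h).mem_set_image]
  · rwa [hsupp, (ap_injective h).mem_set_image]
  · intro x hx
    rw [← image_Ioo_of_strictMono hh] at hx
    obtain ⟨y, hy, rfl⟩ := hx
    simp only [ap_mul, ap_inv_ap, heq y hy]
  · intro x hx
    have hy : ap h⁻¹ x ∉ Ioo a b := fun hy => hx <| by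
      simpa only [ap_ap_inv] using (image_Ioo_of_strictMono hh a b).subset (mem_image_of_mem _ hy)
    simp only [ap_mul, hid _ hy, ap_ap_inv]

end IsOneBumpFactor

theorem statement11 (G : Subgroup PermR) (hPL : ∀ g ∈ G, IsPL g)
    (a₁ b₁ a₂ b₂ : ℝ) (g₁ g₂ : PermR)
    (h1 : AssociatedFactor G a₁ b₁ g₁) (h2 : AssociatedFactor G a₂ b₂ g₂)
    (hcl : Icc a₁ b₁ ⊆ Ioo a₂ b₂) :
    (∃ f ∈ G, IsFactorOf (g₂⁻¹ * g₁ * g₂) f) ∧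
    Supp (g₂⁻¹ * g₁ * g₂) = ap g₂ '' Ioo a₁ b₁ ∧
    ap g₂ '' Ioo a₁ b₁ ⊆ Ioo a₂ b₂ := by
  obtain ⟨f₁, hf₁G, hg₁⟩ := h1
  obtain ⟨f₂, hf₂G, hg₂⟩ := h2
  have hA₁ : Supp g₁ ⊆ Supp g₂ := by
    rw [hg₁.supp_eq, hg₂.supp_eq]
    exact Ioo_subset_Icc_self.trans hcl
  have hconj : g₂⁻¹ * g₁ * g₂ = f₂⁻¹ * g₁ * f₂ :=
    conj_congr_of_eqOn_supp fun x hx => hg₂.2.1 x (hg₂.supp_eq ▸ hA₁ hx)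
  refine ⟨⟨f₂⁻¹ * f₁ * f₂, mul_mem (mul_mem (inv_mem hf₂G) hf₁G) hf₂G, _, _,
    hconj ▸ hg₁.conj (hPL f₂ hf₂G).1⟩, by rw [supp_conj, hg₁.supp_eq], ?_⟩
  rw [← hg₁.supp_eq, ← hg₂.supp_eq]
  exact image_mono hA₁ |>.trans (mapsTo_supp g₂).image_subset

end PLPaper
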